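/- Substituting b_i := q_i and a_i := q'_i into the quadric −Σ_{i=1}^5 a_i b_i yields −Σ_{i=1}^5 q_i q'_i, which is identically zero as a polynomial in x_0, x_{ij}, y_i. -/
import Mathlib
set_option maxHeartbeats 2000000


open MvPolynomial

namespace Stmt10

/-- Variables: `x₀`, `x_{ij}` for `1 ≤ i < j ≤ 5` (0-indexed), and `y₁,…,y₅`. -/
abbrev V (_ : Type*) := Unit ⊕ {p : Fin 5 × Fin 5 // p.1 < p.2} ⊕ Fin 5

variable (k : Type*) [Field k]

noncomputable def x0 : MvPolynomial (V k) k := X (Sum.inl ())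

noncomputable def y (i : Fin 5) : MvPolynomial (V k) k := X (Sum.inr (Sum.inr i))

/-- The generic 5×5 skew-symmetric matrix `P`. -/
noncomputable def P : Matrix (Fin 5) (Fin 5) (MvPolynomial (V k) k) := fun i j =>
  if h : i < j then X (Sum.inr (Sum.inl ⟨(i, j), h⟩))
  else if h' : j < i then - X (Sum.inr (Sum.inl ⟨(j, i), h'⟩))
  else 0

/-- `Pf(P,i)`: the Pfaffian of the 4×4 skew-symmetric matrix obtained from `P`
by deleting the `i`-th row and column. -/
noncomputable def pfDel (i : Fin 5) : MvPolynomial (V k) k :=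
  let s := i.succAbove
  P k (s 0) (s 1) * P k (s 2) (s 3)
    - P k (s 0) (s 2) * P k (s 1) (s 3)
    + P k (s 0) (s 3) * P k (s 1) (s 2)

/-- `qᵢ = x₀ yᵢ + (−1)^{i−1} Pf(P,i)` (here `i` is 0-indexed, so the sign is `(−1)^i`). -/
noncomputable def q (i : Fin 5) : MvPolynomial (V k) k :=
  x0 k * y k i + (-1 : MvPolynomial (V k) k) ^ (i : ℕ) * pfDel k i

/-- `q'ᵢ = (y₁,…,y₅)·Pᵢ`, the `i`-th entry of the row vector `y·P`. -/
noncomputable def q' (i : Fin 5) : MvPolynomial (V k) k :=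
  ∑ j : Fin 5, y k j * P k j i

/-- The 27 variables: the 16 spinor variables together with `a₁,…,a₅`, `b₁,…,b₅`, `w`. -/
abbrev W (k : Type*) := V k ⊕ (Fin 5 ⊕ Fin 5 ⊕ Unit)

/-- The substitution `aᵢ ↦ q'ᵢ`, `bᵢ ↦ qᵢ`, fixing the spinor variables. -/
noncomputable def subst : W k → MvPolynomial (V k) k
  | Sum.inl v => X v
  | Sum.inr (Sum.inl i) => q' k i
  | Sum.inr (Sum.inr (Sum.inl i)) => q k i
  | Sum.inr (Sum.inr (Sum.inr ())) => 0

/-- Substituting `bᵢ := qᵢ`, `aᵢ := q'ᵢ` into `−Σ aᵢbᵢ` yields `−Σ qᵢq'ᵢ`,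
which vanishes identically. -/
theorem stmt_10 :
    bind₁ (subst k)
        (-(∑ i : Fin 5, X (Sum.inr (Sum.inl i) : W k) * X (Sum.inr (Sum.inr (Sum.inl i)))))
      = -(∑ i : Fin 5, q k i * q' k i) ∧
    -(∑ i : Fin 5, q k i * q' k i) = 0 := by
  constructor
  · simp [map_neg, map_sum, map_mul, bind₁_X_right, subst, mul_comm]
  · simp only [Fin.sum_univ_five, q, q', pfDel, x0, y,
      show ((0:Fin 5).succAbove 0) = 1 by decide,
      show ((0:Fin 5).succAbove 1) = 2 by decide,
      show ((0:Fin 5).succAbove 2) = 3 by decide,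
      show ((0:Fin 5).succAbove 3) = 4 by decide,
      show ((1:Fin 5).succAbove 0) = 0 by decide,
      show ((1:Fin 5).succAbove 1) = 2 by decide,
      show ((1:Fin 5).succAbove 2) = 3 by decide,
      show ((1:Fin 5).succAbove 3) = 4 by decide,
      show ((2:Fin 5).succAbove 0) = 0 by decide,
      show ((2:Fin 5).succAbove 1) = 1 by decide,
      show ((2:Fin 5).succAbove 2) = 3 by decide,
      show ((2:Fin 5).succAbove 3) = 4 by decide,
      show ((3:Fin 5).succAbove 0) = 0 by decide,
      show ((3:Fin 5).succAbove 1) = 1 by decide,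
      show ((3:Fin 5).succAbove 2) = 2 by decide,
      show ((3:Fin 5).succAbove 3) = 4 by decide,
      show ((4:Fin 5).succAbove 0) = 0 by decide,
      show ((4:Fin 5).succAbove 1) = 1 by decide,
      show ((4:Fin 5).succAbove 2) = 2 by decide,
      show ((4:Fin 5).succAbove 3) = 3 by decide,
      show P k 0 0 = 0 by simp [P],
      show (((0:Fin 5)):ℕ) = 0 from rfl,
      show P k 1 1 = 0 by simp [P],
      show (((1:Fin 5)):ℕ) = 1 from rfl,
      show P k 2 2 = 0 by simp [P],
      show (((2:Fin 5)):ℕ) = 2 from rfl,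
      show P k 3 3 = 0 by simp [P],
      show (((3:Fin 5)):ℕ) = 3 from rfl,
      show P k 4 4 = 0 by simp [P],
      show (((4:Fin 5)):ℕ) = 4 from rfl,
      show P k 0 1 = X (Sum.inr (Sum.inl ⟨(0,1), by decide⟩)) from dif_pos (by decide),
      show P k 1 0 = - X (Sum.inr (Sum.inl ⟨(0,1), by decide⟩)) by rw [P]; rw [dif_neg (by decide), dif_pos (by decide)],
      show P k 0 2 = X (Sum.inr (Sum.inl ⟨(0,2), by decide⟩)) from dif_pos (by decide),
      show P k 2 0 = - X (Sum.inr (Sum.inl ⟨(0,2), by decide⟩)) by rw [P]; rw [dif_neg (by decide), dif_pos (by decide)],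
      show P k 0 3 = X (Sum.inr (Sum.inl ⟨(0,3), by decide⟩)) from dif_pos (by decide),
      show P k 3 0 = - X (Sum.inr (Sum.inl ⟨(0,3), by decide⟩)) by rw [P]; rw [dif_neg (by decide), dif_pos (by decide)],
      show P k 0 4 = X (Sum.inr (Sum.inl ⟨(0,4), by decide⟩)) from dif_pos (by decide),
      show P k 4 0 = - X (Sum.inr (Sum.inl ⟨(0,4), by decide⟩)) by rw [P]; rw [dif_neg (by decide), dif_pos (by decide)],
      show P k 1 2 = X (Sum.inr (Sum.inl ⟨(1,2), by decide⟩)) from dif_pos (by decide),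
      show P k 2 1 = - X (Sum.inr (Sum.inl ⟨(1,2), by decide⟩)) by rw [P]; rw [dif_neg (by decide), dif_pos (by decide)],
      show P k 1 3 = X (Sum.inr (Sum.inl ⟨(1,3), by decide⟩)) from dif_pos (by decide),
      show P k 3 1 = - X (Sum.inr (Sum.inl ⟨(1,3), by decide⟩)) by rw [P]; rw [dif_neg (by decide), dif_pos (by decide)],
      show P k 1 4 = X (Sum.inr (Sum.inl ⟨(1,4), by decide⟩)) from dif_pos (by decide),
      show P k 4 1 = - X (Sum.inr (Sum.inl ⟨(1,4), by decide⟩)) by rw [P]; rw [dif_neg (by decide), dif_pos (by decide)],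
      show P k 2 3 = X (Sum.inr (Sum.inl ⟨(2,3), by decide⟩)) from dif_pos (by decide),
      show P k 3 2 = - X (Sum.inr (Sum.inl ⟨(2,3), by decide⟩)) by rw [P]; rw [dif_neg (by decide), dif_pos (by decide)],
      show P k 2 4 = X (Sum.inr (Sum.inl ⟨(2,4), by decide⟩)) from dif_pos (by decide),
      show P k 4 2 = - X (Sum.inr (Sum.inl ⟨(2,4), by decide⟩)) by rw [P]; rw [dif_neg (by decide), dif_pos (by decide)],
      show P k 3 4 = X (Sum.inr (Sum.inl ⟨(3,4), by decide⟩)) from dif_pos (by decide),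
      show P k 4 3 = - X (Sum.inr (Sum.inl ⟨(3,4), by decide⟩)) by rw [P]; rw [dif_neg (by decide), dif_pos (by decide)]]
    ring

end Stmt10
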